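/- Let Ω ⊂ ℝⁿ be open, λ > 0, and let u be smooth on Ω with u > 0 and Δu = −λu on Ω; set v = log u and w = √u. Let α > 0, C, d ∈ ℝ and define b := α|∇w|² + C·v − d on Ω. Then at every point of Ω, Δb + 2⟨∇b, ∇v⟩ > −αλ|∇w|² + C|∇v|² − Cλ. -/

import Mathlib

open scoped RealInnerProductSpace

/-- The Hessian bilinear form of `f` at `x`, applied to vectors `X`, `Y`. -/
noncomputable def hess {n : ℕ} (f : EuclideanSpace ℝ (Fin n) → ℝ)
    (x X Y : EuclideanSpace ℝ (Fin n)) : ℝ :=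
  fderiv ℝ (fderiv ℝ f) x X Y

/-- The Euclidean Laplacian of `f` at `x`: the trace of the Hessian. -/
noncomputable def lap {n : ℕ} (f : EuclideanSpace ℝ (Fin n) → ℝ)
    (x : EuclideanSpace ℝ (Fin n)) : ℝ :=
  ∑ i : Fin n, hess f x (EuclideanSpace.single i 1) (EuclideanSpace.single i 1)

noncomputable def ee {n : ℕ} (i : Fin n) : EuclideanSpace ℝ (Fin n) :=
  EuclideanSpace.single i 1

noncomputable def pd {n : ℕ} (i : Fin n) (f : EuclideanSpace ℝ (Fin n) → ℝ) :
    EuclideanSpace ℝ (Fin n) → ℝ :=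
  fun y => fderiv ℝ f y (ee i)

variable {n : ℕ} {Ω : Set (EuclideanSpace ℝ (Fin n))} {f g : EuclideanSpace ℝ (Fin n) → ℝ}
  {x : EuclideanSpace ℝ (Fin n)}

theorem pd_contDiffOn {m : WithTop ℕ∞} (hΩ : IsOpen Ω) (hf : ContDiffOn ℝ (m+1) f Ω)
    (i : Fin n) : ContDiffOn ℝ m (pd i f) Ω :=
  (hf.fderiv_of_isOpen hΩ le_rfl).clm_apply contDiffOn_const

theorem diffAt_of_contDiffOn {m : WithTop ℕ∞} (hΩ : IsOpen Ω) (hf : ContDiffOn ℝ m f Ω)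
    (hm : 1 ≤ m) (hx : x ∈ Ω) : DifferentiableAt ℝ f x :=
  (hf.contDiffAt (hΩ.mem_nhds hx)).differentiableAt (zero_lt_one.trans_le hm).ne'

theorem gradient_apply_coord (i : Fin n) : gradient f x i = pd i f x := by
  have h1 : inner ℝ (gradient f x) (ee i) = fderiv ℝ f x (ee i) :=
    InnerProductSpace.toDual_symm_apply
  rw [ee, EuclideanSpace.inner_single_right, one_mul, conj_trivial] at h1
  exact h1

theorem inner_gradients (f g : EuclideanSpace ℝ (Fin n) → ℝ) (x) :
    ⟪gradient f x, gradient g x⟫ = ∑ i, pd i f x * pd i g x := by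
  rw [PiLp.inner_apply]
  exact Finset.sum_congr rfl fun i _ => by
    simp [gradient_apply_coord, mul_comm]

theorem norm_gradient_sq (f : EuclideanSpace ℝ (Fin n) → ℝ) (x) :
    ‖gradient f x‖ ^ 2 = ∑ i, pd i f x * pd i f x := by
  rw [← real_inner_self_eq_norm_sq]
  exact inner_gradients f f x

theorem pd_pd_eq_hess (hΩ : IsOpen Ω) (hf : ContDiffOn ℝ 2 f Ω) (hx : x ∈ Ω) (i j : Fin n) :
    pd i (pd j f) x = hess f x (ee i) (ee j) := by
  have hd : DifferentiableAt ℝ (fderiv ℝ f) x :=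
    ((hf.contDiffAt (hΩ.mem_nhds hx)).fderiv_right (le_refl 2)).differentiableAt one_ne_zero
  have : fderiv ℝ (fun y => fderiv ℝ f y (ee j)) x
      = (fderiv ℝ f x).comp (fderiv ℝ (fun _ => ee j) x)
        + (fderiv ℝ (fderiv ℝ f) x).flip (ee j) :=
    fderiv_clm_apply hd (differentiableAt_const _)
  show fderiv ℝ (fun y => fderiv ℝ f y (ee j)) x (ee i) = _
  rw [this]
  simp [hess]

theorem schwarz (hΩ : IsOpen Ω) (hf : ContDiffOn ℝ 2 f Ω) (hx : x ∈ Ω) (i j : Fin n) :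
    pd i (pd j f) x = pd j (pd i f) x := by
  rw [pd_pd_eq_hess hΩ hf hx, pd_pd_eq_hess hΩ hf hx]
  exact (hf.contDiffAt (hΩ.mem_nhds hx)).isSymmSndFDerivAt (by simp [minSmoothness_of_isRCLikeNormedField]) (ee i) (ee j)

theorem lap_eq_sum_pd (hΩ : IsOpen Ω) (hf : ContDiffOn ℝ 2 f Ω) (hx : x ∈ Ω) :
    lap f x = ∑ i, pd i (pd i f) x := by
  unfold lap
  exact Finset.sum_congr rfl fun i _ => (pd_pd_eq_hess hΩ hf hx i i).symm

noncomputable def qf {n : ℕ} (u : EuclideanSpace ℝ (Fin n) → ℝ) :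
    EuclideanSpace ℝ (Fin n) → ℝ := fun y => ∑ j, pd j u y * pd j u y

noncomputable def Bf {n : ℕ} (α C d : ℝ) (u : EuclideanSpace ℝ (Fin n) → ℝ) :
    EuclideanSpace ℝ (Fin n) → ℝ :=
  fun y => α / 4 * (qf u y * (u y)⁻¹) + C * Real.log (u y) - d

noncomputable def Ff {n : ℕ} (α C : ℝ) (u : EuclideanSpace ℝ (Fin n) → ℝ) (i : Fin n) :
    EuclideanSpace ℝ (Fin n) → ℝ :=
  fun y => α / 4 * (qf u y * (-(u y * u y)⁻¹ * pd i u y)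
      + (u y)⁻¹ * (2 * ∑ j, pd j u y * pd i (pd j u) y))
    + C * ((u y)⁻¹ * pd i u y)

section main
variable {u : EuclideanSpace ℝ (Fin n) → ℝ} {α C d lam : ℝ}
variable (hΩ : IsOpen Ω) (hu : ContDiffOn ℝ 3 u Ω) (hupos : ∀ y ∈ Ω, 0 < u y)

include hΩ hu

theorem hg (j : Fin n) : ContDiffOn ℝ 2 (pd j u) Ω :=
  pd_contDiffOn hΩ (by exact_mod_cast hu) j

theorem hH (i j : Fin n) : ContDiffOn ℝ 1 (pd i (pd j u)) Ω :=
  pd_contDiffOn hΩ (by exact_mod_cast hg hΩ hu j) i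

theorem hUd (hx : x ∈ Ω) : HasFDerivAt u (fderiv ℝ u x) x :=
  (diffAt_of_contDiffOn hΩ hu (by norm_num) hx).hasFDerivAt

theorem hgd (j : Fin n) (hx : x ∈ Ω) : HasFDerivAt (pd j u) (fderiv ℝ (pd j u) x) x :=
  (diffAt_of_contDiffOn hΩ (hg hΩ hu j) (by norm_num) hx).hasFDerivAt

theorem hHd (i j : Fin n) (hx : x ∈ Ω) :
    HasFDerivAt (pd i (pd j u)) (fderiv ℝ (pd i (pd j u)) x) x :=
  (diffAt_of_contDiffOn hΩ (hH hΩ hu i j) le_rfl hx).hasFDerivAt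

include hupos

theorem pdB (hx : x ∈ Ω) (i : Fin n) :
    pd i (Bf α C d u) x = Ff α C u i x := by
  have hne : u x ≠ 0 := (hupos x hx).ne'
  have hU := hUd hΩ hu hx
  have hq : HasFDerivAt (qf u)
      (∑ j, (pd j u x • fderiv ℝ (pd j u) x + pd j u x • fderiv ℝ (pd j u) x)) x :=
    HasFDerivAt.fun_sum fun j _ => (hgd hΩ hu j hx).mul (hgd hΩ hu j hx)
  have hinv : HasFDerivAt (fun z => (u z)⁻¹) ((-(u x ^ 2)⁻¹) • fderiv ℝ u x) x :=
    (hasDerivAt_inv hne).comp_hasFDerivAt x hU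
  have hlog := hU.log hne
  have hB : HasFDerivAt (Bf α C d u)
      ((α / 4) • (qf u x • ((-(u x ^ 2)⁻¹) • fderiv ℝ u x)
          + (u x)⁻¹ • (∑ j, (pd j u x • fderiv ℝ (pd j u) x + pd j u x • fderiv ℝ (pd j u) x)))
        + C • ((u x)⁻¹ • fderiv ℝ u x)) x :=
    ((hq.mul hinv).const_mul (α / 4)).add (hlog.const_mul C) |>.sub_const d
  show fderiv ℝ (Bf α C d u) x (ee i) = _
  rw [show fderiv ℝ (Bf α C d u) x = _ from hB.fderiv]
  show _ = α / 4 * (qf u x * (-(u x * u x)⁻¹ * pd i u x)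
      + (u x)⁻¹ * (2 * ∑ j, pd j u x * pd i (pd j u) x))
    + C * ((u x)⁻¹ * pd i u x)
  simp only [ContinuousLinearMap.add_apply, ContinuousLinearMap.coe_smul', Pi.smul_apply,
    ContinuousLinearMap.sum_apply, ContinuousLinearMap.neg_apply, smul_eq_mul, pd]
  simp only [Finset.sum_add_distrib]
  have hsq : (u x ^ 2)⁻¹ = (u x * u x)⁻¹ := by rw [sq]
  rw [hsq]
  ring

theorem pdpdB (hx : x ∈ Ω) (i : Fin n) :
    pd i (pd i (Bf α C d u)) x =
      α/2 * qf u x * (pd i u x * pd i u x) * (u x * u x * u x)⁻¹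
      - α/4 * qf u x * pd i (pd i u) x * (u x * u x)⁻¹
      - α * pd i u x * (∑ j, pd j u x * pd i (pd j u) x) * (u x * u x)⁻¹
      + (α/2 * (u x)⁻¹) * (∑ j, pd i (pd j u) x * pd i (pd j u) x)
      + (α/2 * (u x)⁻¹) * (∑ j, pd j u x * pd i (pd i (pd j u)) x)
      + (C * (u x)⁻¹) * pd i (pd i u) x
      - (C * (u x * u x)⁻¹) * (pd i u x * pd i u x) := by
  have hne : u x ≠ 0 := (hupos x hx).ne'
  have hU := hUd hΩ hu hx
  have hq : HasFDerivAt (qf u)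
      (∑ j, (pd j u x • fderiv ℝ (pd j u) x + pd j u x • fderiv ℝ (pd j u) x)) x :=
    HasFDerivAt.fun_sum fun j _ => (hgd hΩ hu j hx).mul (hgd hΩ hu j hx)
  have hinv : HasFDerivAt (fun z => (u z)⁻¹) ((-(u x ^ 2)⁻¹) • fderiv ℝ u x) x :=
    (hasDerivAt_inv hne).comp_hasFDerivAt x hU
  have h1 := hU.mul hU
  have h2 : HasFDerivAt (fun z => (u z * u z)⁻¹)
      ((-((u x * u x) ^ 2)⁻¹) • (u x • fderiv ℝ u x + u x • fderiv ℝ u x)) x :=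
    (hasDerivAt_inv (mul_ne_zero hne hne)).comp_hasFDerivAt x h1
  have h4 := h2.neg.mul (hgd hΩ hu i hx)
  have h5 := hq.mul h4
  have h7 : HasFDerivAt (fun y => ∑ j, pd j u y * pd i (pd j u) y)
      (∑ j, (pd j u x • fderiv ℝ (pd i (pd j u)) x + pd i (pd j u) x • fderiv ℝ (pd j u) x)) x :=
    HasFDerivAt.fun_sum fun j _ => (hgd hΩ hu j hx).mul (hHd hΩ hu i j hx)
  have h8 := hinv.mul (h7.const_mul 2)
  have hF := ((h5.add h8).const_mul (α/4)).add ((hinv.mul (hgd hΩ hu i hx)).const_mul C)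
  have hEq : fderiv ℝ (pd i (Bf α C d u)) x = fderiv ℝ (Ff α C u i) x := by
    apply Filter.EventuallyEq.fderiv_eq
    filter_upwards [hΩ.mem_nhds hx] with y hy
    exact pdB hΩ hu hupos hy i
  show fderiv ℝ (pd i (Bf α C d u)) x (ee i) = _
  rw [hEq, show fderiv ℝ (Ff α C u i) x = _ from hF.fderiv]
  simp only [ContinuousLinearMap.add_apply, ContinuousLinearMap.coe_smul', Pi.smul_apply,
    ContinuousLinearMap.sum_apply, ContinuousLinearMap.neg_apply, smul_eq_mul, pd,
    Pi.neg_apply, Pi.mul_apply]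
  simp only [Finset.sum_add_distrib]
  have hsq : (u x ^ 2)⁻¹ = (u x * u x)⁻¹ := by rw [sq]
  field_simp
  ring

theorem third_trace (heig' : ∀ y ∈ Ω, lap u y = -lam * u y) (hx : x ∈ Ω) (j : Fin n) :
    ∑ i, pd i (pd i (pd j u)) x = -lam * pd j u x := by
  have h2 : ContDiffOn ℝ 2 u Ω := hu.of_le (by norm_num)
  have e1 : ∀ i : Fin n, pd i (pd i (pd j u)) x = pd i (pd j (pd i u)) x := by
    intro i
    show fderiv ℝ (pd i (pd j u)) x (ee i) = fderiv ℝ (pd j (pd i u)) x (ee i)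
    congr 1
    apply Filter.EventuallyEq.fderiv_eq
    filter_upwards [hΩ.mem_nhds hx] with y hy
    exact schwarz hΩ h2 hy i j
  have e2 : ∀ i : Fin n, pd i (pd j (pd i u)) x = pd j (pd i (pd i u)) x := fun i =>
    schwarz hΩ (hg hΩ hu i) hx i j
  have hsum : HasFDerivAt (fun y => ∑ i, pd i (pd i u) y)
      (∑ i, fderiv ℝ (pd i (pd i u)) x) x :=
    HasFDerivAt.fun_sum fun i _ => hHd hΩ hu i i hx
  have e3 : ∑ i, pd j (pd i (pd i u)) x = fderiv ℝ (fun y => ∑ i, pd i (pd i u) y) x (ee j) := by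
    rw [show fderiv ℝ (fun y => ∑ i, pd i (pd i u) y) x = _ from hsum.fderiv]
    simp [pd, ContinuousLinearMap.sum_apply]
  have e4 : fderiv ℝ (fun y => ∑ i, pd i (pd i u) y) x = fderiv ℝ (fun y => -lam * u y) x := by
    apply Filter.EventuallyEq.fderiv_eq
    filter_upwards [hΩ.mem_nhds hx] with y hy
    rw [← lap_eq_sum_pd hΩ h2 hy]
    exact heig' y hy
  have e5 : fderiv ℝ (fun y => -lam * u y) x (ee j) = -lam * pd j u x := by
    rw [show fderiv ℝ (fun y => -lam * u y) x = _ from ((hUd hΩ hu hx).const_mul (-lam)).fderiv]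
    simp [pd]
  calc ∑ i, pd i (pd i (pd j u)) x = ∑ i, pd j (pd i (pd i u)) x := by
        exact Finset.sum_congr rfl fun i _ => (e1 i).trans (e2 i)
    _ = -lam * pd j u x := by rw [e3, e4, e5]

end main

set_option maxHeartbeats 1000000

/-- Inequality (3.10) of the paper's Lemma 3.1 (flat case, `Ric ≡ 0`): discarding the
completed square in the Bochner terms gives the strict inequality
`Δb + 2⟨∇b,∇v⟩ > −αλ|∇w|² + C·|∇v|² − Cλ` for `b = α|∇w|² + C·v − d`. -/
theorem bochner_gradient_strict_inequality {n : ℕ} (hn : 0 < n)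
    (Ω : Set (EuclideanSpace ℝ (Fin n))) (hΩo : IsOpen Ω)
    (lam : ℝ) (hlam : 0 < lam)
    (u : EuclideanSpace ℝ (Fin n) → ℝ) (hu : ContDiffOn ℝ (⊤ : ℕ∞) u Ω)
    (hupos : ∀ x ∈ Ω, 0 < u x) (heig : ∀ x ∈ Ω, lap u x = -lam * u x)
    (α C d : ℝ) (hα : 0 < α)
    (v w b : EuclideanSpace ℝ (Fin n) → ℝ)
    (hv : v = fun y => Real.log (u y)) (hw : w = fun y => Real.sqrt (u y))
    (hb : b = fun x => α * ‖gradient w x‖ ^ 2 + C * v x - d) :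
    ∀ x ∈ Ω,
      lap b x + 2 * ⟪gradient b x, gradient v x⟫
        > -α * lam * ‖gradient w x‖ ^ 2 + C * ‖gradient v x‖ ^ 2 - C * lam := by
  subst hv hw hb
  have hu3 : ContDiffOn ℝ 3 u Ω := hu.of_le (WithTop.coe_le_coe.mpr le_top)
  have hu2 : ContDiffOn ℝ 2 u Ω := hu.of_le (WithTop.coe_le_coe.mpr le_top)
  have hne : ∀ y ∈ Ω, u y ≠ 0 := fun y hy => (hupos y hy).ne'
  intro x hx
  have hp : 0 < u x := hupos x hx
  have pne : u x ≠ 0 := hne x hx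
  -- coordinates of ∇w and ∇v
  have hpdw : ∀ y ∈ Ω, ∀ i, pd i (fun z => Real.sqrt (u z)) y
      = 1 / (2 * Real.sqrt (u y)) * pd i u y := by
    intro y hy i
    show fderiv ℝ (fun z => Real.sqrt (u z)) y (ee i) = _
    rw [show fderiv ℝ (fun z => Real.sqrt (u z)) y = _ from
      ((hUd hΩo hu3 hy).sqrt (hne y hy)).fderiv]
    simp [pd]
  have hpdv : ∀ y ∈ Ω, ∀ i, pd i (fun z => Real.log (u z)) y = (u y)⁻¹ * pd i u y := by
    intro y hy i
    show fderiv ℝ (fun z => Real.log (u z)) y (ee i) = _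
    rw [show fderiv ℝ (fun z => Real.log (u z)) y = _ from
      ((hUd hΩo hu3 hy).log (hne y hy)).fderiv]
    simp [pd]
  have hw2 : ∀ y ∈ Ω, ∑ i, pd i (fun z => Real.sqrt (u z)) y * pd i (fun z => Real.sqrt (u z)) y
      = (4 * u y)⁻¹ * qf u y := by
    intro y hy
    have hss : Real.sqrt (u y) * Real.sqrt (u y) = u y := Real.mul_self_sqrt (hupos y hy).le
    have sne : Real.sqrt (u y) ≠ 0 := (Real.sqrt_pos.mpr (hupos y hy)).ne'
    rw [show qf u y = ∑ j, pd j u y * pd j u y from rfl, Finset.mul_sum]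
    refine Finset.sum_congr rfl fun i _ => ?_
    rw [hpdw y hy i, ← hss]
    field_simp
    rw [Real.sqrt_sq (Real.sqrt_nonneg _)]; ring
  -- b agrees with Bf on Ω
  have hbB : Set.EqOn (fun x => α * ‖gradient (fun y => Real.sqrt (u y)) x‖ ^ 2
      + C * Real.log (u x) - d) (Bf α C d u) Ω := by
    intro y hy
    show α * ‖gradient (fun z => Real.sqrt (u z)) y‖ ^ 2 + C * Real.log (u y) - d = _
    rw [norm_gradient_sq, hw2 y hy,
      show Bf α C d u y = α / 4 * (qf u y * (u y)⁻¹) + C * Real.log (u y) - d from rfl]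
    have : (4 * u y)⁻¹ * qf u y = (1:ℝ)/4 * (qf u y * (u y)⁻¹) := by
      field_simp
    rw [this]
    ring
  -- smoothness of Bf
  have hqf2 : ContDiffOn ℝ 2 (qf u) Ω :=
    ContDiffOn.sum fun j _ => (hg hΩo hu3 j).mul (hg hΩo hu3 j)
  have hBf2 : ContDiffOn ℝ 2 (Bf α C d u) Ω :=
    ((contDiffOn_const.mul (hqf2.mul (hu2.inv hne))).add
      (contDiffOn_const.mul (hu2.log hne))).sub contDiffOn_const
  -- transfer of lap and pd from b to Bf
  have hfd : ∀ y ∈ Ω, fderiv ℝ (fun x => α * ‖gradient (fun y => Real.sqrt (u y)) x‖ ^ 2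
      + C * Real.log (u x) - d) y = fderiv ℝ (Bf α C d u) y := by
    intro y hy
    apply Filter.EventuallyEq.fderiv_eq
    filter_upwards [hΩo.mem_nhds hy] with z hz using hbB hz
  have hlapb : lap (fun x => α * ‖gradient (fun y => Real.sqrt (u y)) x‖ ^ 2
      + C * Real.log (u x) - d) x = ∑ i, pd i (pd i (Bf α C d u)) x := by
    have h2 : fderiv ℝ (fderiv ℝ (fun x => α * ‖gradient (fun y => Real.sqrt (u y)) x‖ ^ 2
        + C * Real.log (u x) - d)) x = fderiv ℝ (fderiv ℝ (Bf α C d u)) x := by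
      apply Filter.EventuallyEq.fderiv_eq
      filter_upwards [hΩo.mem_nhds hx] with z hz using hfd z hz
    have h3 : lap (fun x => α * ‖gradient (fun y => Real.sqrt (u y)) x‖ ^ 2
        + C * Real.log (u x) - d) x = lap (Bf α C d u) x := by
      unfold lap hess
      rw [h2]
    rw [h3, lap_eq_sum_pd hΩo hBf2 hx]
  have hpdb : ∀ i, pd i (fun x => α * ‖gradient (fun y => Real.sqrt (u y)) x‖ ^ 2
      + C * Real.log (u x) - d) x = Ff α C u i x := by
    intro i
    show fderiv ℝ _ x (ee i) = _
    rw [hfd x hx]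
    exact pdB hΩo hu3 hupos hx i
  -- norms at x
  have hnw : ‖gradient (fun y => Real.sqrt (u y)) x‖ ^ 2 = (4 * u x)⁻¹ * qf u x := by
    rw [norm_gradient_sq]; exact hw2 x hx
  have hnv : ‖gradient (fun y => Real.log (u y)) x‖ ^ 2 = (u x)⁻¹ * (u x)⁻¹ * qf u x := by
    rw [norm_gradient_sq]
    rw [show qf u x = ∑ j, pd j u x * pd j u x from rfl, Finset.mul_sum]
    exact Finset.sum_congr rfl fun i _ => by rw [hpdv x hx i]; ring
  -- the eigenvalue facts
  have hL : ∑ i, pd i (pd i u) x = -lam * u x := by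
    rw [← lap_eq_sum_pd hΩo hu2 hx]; exact heig x hx
  have hT : ∑ i, ∑ j, pd j u x * pd i (pd i (pd j u)) x = -lam * qf u x := by
    rw [Finset.sum_comm]
    have e : ∀ j : Fin n, ∑ i, pd j u x * pd i (pd i (pd j u)) x
        = -lam * (pd j u x * pd j u x) := by
      intro j
      rw [← Finset.mul_sum, third_trace hΩo hu3 hupos heig hx j]
      ring
    rw [Finset.sum_congr rfl fun j _ => e j, ← Finset.mul_sum]
    rfl
  -- rewrite the goal
  rw [hlapb, inner_gradients, hnw, hnv]
  have hbv : ∑ i, pd i (fun x => α * ‖gradient (fun y => Real.sqrt (u y)) x‖ ^ 2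
      + C * Real.log (u x) - d) x * pd i (fun y => Real.log (u y)) x
      = ∑ i, Ff α C u i x * ((u x)⁻¹ * pd i u x) :=
    Finset.sum_congr rfl fun i _ => by rw [hpdb i, hpdv x hx i]
  rw [hbv]
  rw [Finset.sum_congr rfl fun i _ => pdpdB hΩo hu3 hupos hx i]
  rw [Finset.mul_sum, ← Finset.sum_add_distrib]
  have hstep : ∀ i ∈ Finset.univ, (α/2 * qf u x * (pd i u x * pd i u x) * (u x * u x * u x)⁻¹
      - α/4 * qf u x * pd i (pd i u) x * (u x * u x)⁻¹
      - α * pd i u x * (∑ j, pd j u x * pd i (pd j u) x) * (u x * u x)⁻¹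
      + (α/2 * (u x)⁻¹) * (∑ j, pd i (pd j u) x * pd i (pd j u) x)
      + (α/2 * (u x)⁻¹) * (∑ j, pd j u x * pd i (pd i (pd j u)) x)
      + (C * (u x)⁻¹) * pd i (pd i u) x
      - (C * (u x * u x)⁻¹) * (pd i u x * pd i u x))
      + 2 * (Ff α C u i x * ((u x)⁻¹ * pd i u x))
      = (-(α/4) * qf u x * (u x * u x)⁻¹) * pd i (pd i u) x
      + (α/2 * (u x)⁻¹) * (∑ j, pd i (pd j u) x * pd i (pd j u) x)
      + (α/2 * (u x)⁻¹) * (∑ j, pd j u x * pd i (pd i (pd j u)) x)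
      + (C * (u x)⁻¹) * pd i (pd i u) x
      + (C * (u x * u x)⁻¹) * (pd i u x * pd i u x) := by
    intro i _
    show _ + 2 * ((α / 4 * (qf u x * (-(u x * u x)⁻¹ * pd i u x)
      + (u x)⁻¹ * (2 * ∑ j, pd j u x * pd i (pd j u) x))
      + C * ((u x)⁻¹ * pd i u x)) * ((u x)⁻¹ * pd i u x)) = _
    field_simp
    ring
  rw [Finset.sum_congr rfl hstep]
  simp only [Finset.sum_add_distrib, ← Finset.mul_sum]
  rw [hL, hT, show ∑ i, pd i u x * pd i u x = qf u x from rfl]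
  -- positivity of the Hessian square term
  set QQ := ∑ i, ∑ j, pd i (pd j u) x * pd i (pd j u) x with hQQdef
  have h1 : (∑ i, pd i (pd i u) x) ^ 2
      ≤ (n : ℝ) * ∑ i, pd i (pd i u) x ^ 2 := by
    simpa using sq_sum_le_card_mul_sum_sq (s := (Finset.univ : Finset (Fin n)))
      (f := fun i => pd i (pd i u) x)
  have h2 : ∑ i, pd i (pd i u) x ^ 2 ≤ QQ := by
    refine Finset.sum_le_sum fun i _ => ?_
    have h := Finset.single_le_sum (f := fun j => pd i (pd j u) x * pd i (pd j u) x)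
      (fun j _ => mul_self_nonneg _) (Finset.mem_univ i)
    calc pd i (pd i u) x ^ 2 = pd i (pd i u) x * pd i (pd i u) x := sq (pd i (pd i u) x)
      _ ≤ _ := h
  have hncast : (0:ℝ) < (n:ℝ) := by exact_mod_cast hn
  have h1' : (lam * u x) ^ 2 ≤ (n:ℝ) * QQ := by
    rw [hL] at h1
    calc (lam * u x)^2 = (-lam * u x)^2 := by ring
      _ ≤ (n:ℝ) * ∑ i, pd i (pd i u) x ^ 2 := h1
      _ ≤ (n:ℝ) * QQ := mul_le_mul_of_nonneg_left h2 hncast.le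
  have h3 : 0 < (lam * u x) ^ 2 := pow_pos (mul_pos hlam hp) 2
  have hQQpos : 0 < QQ := by nlinarith [h1', h3, hncast]
  -- final algebra
  calc -α * lam * ((4 * u x)⁻¹ * qf u x) + C * ((u x)⁻¹ * (u x)⁻¹ * qf u x) - C * lam
      < (-α * lam * ((4 * u x)⁻¹ * qf u x) + C * ((u x)⁻¹ * (u x)⁻¹ * qf u x) - C * lam)
        + (α / 2 * (u x)⁻¹) * QQ := by
        have : 0 < (α / 2 * (u x)⁻¹) * QQ :=
          mul_pos (mul_pos (by linarith) (inv_pos.mpr hp)) hQQpos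
        linarith
    _ = (-(α/4) * qf u x * (u x * u x)⁻¹) * (-lam * u x)
      + (α/2 * (u x)⁻¹) * QQ
      + (α/2 * (u x)⁻¹) * (-lam * qf u x)
      + (C * (u x)⁻¹) * (-lam * u x)
      + (C * (u x * u x)⁻¹) * qf u x := by
        field_simp
        ring
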